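/- arXiv:1403.3277 — 3 statements merged into one kernel-verified Lean document; each statement's English description precedes it below -/
import Mathlib

section
/- If d is a finitely generated metric on a group G, then d is two-sided invariant, i.e. d(g·x·h, g·y·h) = d(x,y) for all g,h,x,y ∈ G. -/
open Monoid

def IsMetricD {α : Type*} (d : α → α → ℝ) : Prop :=
  (∀ x y, d x y = 0 ↔ x = y) ∧ (∀ x y, d x y = d y x) ∧
  (∀ x y z, d x z ≤ d x y + d y z)

def IsBiInvariant {G : Type*} [Group G] (d : G → G → ℝ) : Prop :=
  ∀ g h x y : G, d (g * x * h) (g * y * h) = d x y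

def IsFinGenMetric {G : Type*} [Group G] (d : G → G → ℝ) (A : Set G) : Prop :=
  A.Finite ∧ (1 : G) ∈ A ∧ (∀ a ∈ A, a⁻¹ ∈ A) ∧
  ∀ a b : G, IsLeast { r | ∃ l m : List G, l.length = m.length ∧
    (∀ x ∈ l, x ∈ A) ∧ (∀ y ∈ m, y ∈ A) ∧ l.prod = a ∧ m.prod = b ∧
    r = (List.zipWith d l m).sum } (d a b)

/- Concatenating optimal words for `(a, b)` and `(a', b')` gives words for `(a * a', b * b')`
whose cost is `d a b + d a' b'`, and `d` is the least such cost. -/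
theorem IsFinGenMetric.dist_mul_le {G : Type*} [Group G] {d : G → G → ℝ} {A : Set G}
    (hfg : IsFinGenMetric d A) (a b a' b' : G) : d (a * a') (b * b') ≤ d a b + d a' b' := by
  obtain ⟨-, -, -, hleast⟩ := hfg
  obtain ⟨l, m, hlm, hlA, hmA, rfl, rfl, hcost⟩ := (hleast a b).1
  obtain ⟨l', m', hlm', hlA', hmA', rfl, rfl, hcost'⟩ := (hleast a' b').1
  refine (hleast _ _).2 ⟨l ++ l', m ++ m', by simp [hlm, hlm'], ?_, ?_,
    List.prod_append, List.prod_append, ?_⟩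
  · simpa only [List.mem_append] using fun x hx => hx.elim (hlA x) (hlA' x)
  · simpa only [List.mem_append] using fun y hy => hy.elim (hmA y) (hmA' y)
  · rw [List.zipWith_append hlm, List.sum_append, hcost, hcost']

theorem isBiInvariant_of_le {G : Type*} [Group G] {d : G → G → ℝ}
    (hle : ∀ g h x y : G, d (g * x * h) (g * y * h) ≤ d x y) : IsBiInvariant d := by
  intro g h x y
  refine le_antisymm (hle g h x y) ?_
  calc d x y = d (g⁻¹ * (g * x * h) * h⁻¹) (g⁻¹ * (g * y * h) * h⁻¹) := by group
    _ ≤ d (g * x * h) (g * y * h) := hle _ _ _ _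

/-- Fact 3. Every finitely generated metric on a group is two-sided
invariant. -/
theorem finGenMetric_biInvariant {G : Type*} [Group G] (d : G → G → ℝ) (A : Set G)
    (hm : IsMetricD d) (hfg : IsFinGenMetric d A) : IsBiInvariant d := by
  have hdiag (g : G) : d g g = 0 := (hm.1 g g).2 rfl
  refine isBiInvariant_of_le fun g h x y => ?_
  calc d (g * x * h) (g * y * h) ≤ d (g * x) (g * y) + d h h := hfg.dist_mul_le _ _ _ _
    _ ≤ d g g + d x y + d h h := by gcongr; exact hfg.dist_mul_le _ _ _ _
    _ = d x y := by rw [hdiag, hdiag, zero_add, add_zero]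
end

section
/- For every g in the free product G ∗ F(X), δ(g,1) = inf{ ρ(w,u) : w,u words over S of equal length with w' = g, u' = 1, and w irreducible }. That is, in computing δ(g,1) one may restrict the word representing g to be irreducible. -/
open Monoid

/-- The free product `G ∗ F(X)`. -/
abbrev FP (G X : Type*) [Group G] := Monoid.Coprod G (FreeGroup X)

/-- The alphabet `S = G ⊔ X ⊔ X⁻¹`. -/
abbrev Alphabet (G X : Type*) := G ⊕ (X ⊕ X)

/-- Canonical image of a letter in the free product. -/
def toFP {G X : Type*} [Group G] : Alphabet G X → FP G X
  | Sum.inl g => Coprod.inl g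
  | Sum.inr (Sum.inl x) => Coprod.inr (FreeGroup.of x)
  | Sum.inr (Sum.inr x) => (Coprod.inr (FreeGroup.of x) : FP G X)⁻¹

/-- For a word `w` over `S`, `wordProd w` is `w'`, the product of the images of its letters. -/
def wordProd {G X : Type*} [Group G] (w : List (Alphabet G X)) : FP G X :=
  (w.map toFP).prod

/-- `ρ(v,w) = d(v₁,w₁) + … + d(vₙ,wₙ)`. -/
def rho {α : Type*} (d : α → α → ℝ) (v w : List α) : ℝ :=
  (List.zipWith d v w).sum

/-- The Graev pre-metric `δ` on the free product. -/
noncomputable def graevDelta {G X : Type*} [Group G]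
    (d : Alphabet G X → Alphabet G X → ℝ) (u v : FP G X) : ℝ :=
  sInf { r | ∃ w₁ w₂ : List (Alphabet G X), w₁.length = w₂.length ∧
    wordProd w₁ = u ∧ wordProd w₂ = v ∧ r = rho d w₁ w₂ }

/-- The extension `d` of `d'` from `G ⊔ X` to `S = G ⊔ X ⊔ X⁻¹`. -/
noncomputable def extD {G X : Type*} [Group G] (d' : (G ⊕ X) → (G ⊕ X) → ℝ) :
    Alphabet G X → Alphabet G X → ℝ
  | Sum.inl g, Sum.inl h => d' (Sum.inl g) (Sum.inl h)
  | Sum.inl g, Sum.inr (Sum.inl x) => d' (Sum.inl g) (Sum.inr x)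
  | Sum.inr (Sum.inl x), Sum.inl g => d' (Sum.inr x) (Sum.inl g)
  | Sum.inr (Sum.inl x), Sum.inr (Sum.inl y) => d' (Sum.inr x) (Sum.inr y)
  | Sum.inl g, Sum.inr (Sum.inr x) => d' (Sum.inl g⁻¹) (Sum.inr x)
  | Sum.inr (Sum.inr x), Sum.inl g => d' (Sum.inr x) (Sum.inl g⁻¹)
  | Sum.inr (Sum.inr x), Sum.inr (Sum.inr y) => d' (Sum.inr x) (Sum.inr y)
  | Sum.inr (Sum.inl x), Sum.inr (Sum.inr y) =>
      sInf { r | ∃ c : G, r = d' (Sum.inr x) (Sum.inl c) + d' (Sum.inl c⁻¹) (Sum.inr y) }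
  | Sum.inr (Sum.inr x), Sum.inr (Sum.inl y) =>
      sInf { r | ∃ c : G, r = d' (Sum.inr y) (Sum.inl c) + d' (Sum.inl c⁻¹) (Sum.inr x) }

/-- Formal inverse of a letter of `S`. -/
def formalInv {G X : Type*} [Group G] : Alphabet G X → Alphabet G X
  | Sum.inl g => Sum.inl g⁻¹
  | Sum.inr (Sum.inl x) => Sum.inr (Sum.inr x)
  | Sum.inr (Sum.inr x) => Sum.inr (Sum.inl x)

/-- Admissible adjacent pair in an irreducible word. -/
def okPair {G X : Type*} [Group G] : Alphabet G X → Alphabet G X → Prop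
  | Sum.inl _, Sum.inl _ => False
  | Sum.inr x, Sum.inr y => Sum.inr y ≠ formalInv (Sum.inr x : Alphabet G X)
  | _, _ => True

/-- A word over `S` is irreducible if no two adjacent letters lie in `G`
and no two adjacent letters of `X ⊔ X⁻¹` are mutually inverse. -/
def IsIrreducibleWord {G X : Type*} [Group G] (w : List (Alphabet G X)) : Prop :=
  List.Chain' okPair w

/-!
Take `w, u` of equal length with `u' = 1` and `w` reducible, and look at a bad pair `a b` of `w`
together with the letters `p q` of `u` below it. Each of the following moves keeps `w'` and
`u' = 1`, does not increase `ρ(w, u)`, and decreases `|w| + |u| + #X(w) + #X(u)`, where `#X`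
counts letters of `X ⊔ X⁻¹`:
* `a, b, p, q ∈ G`: merge `a b` into `ab` and `p q` into `pq` (bi-invariance);
* `a, b ∈ G`, `p ∈ X ⊔ X⁻¹`: change `p` into `a` and its partner `p⁻¹` into `a⁻¹` (same for `q`);
* `b = a⁻¹ ∈ X ⊔ X⁻¹`, `p ∈ G` (or `q`): change `a b` into `p p⁻¹` (or `q⁻¹ q`);
* `b = a⁻¹ ∈ X ⊔ X⁻¹`, `p, q ∈ X ⊔ X⁻¹`: delete both pairs and change the partner of `q` into `p`.
Here the partner of a letter `q ∈ X ⊔ X⁻¹` of a trivial word is a letter `q⁻¹` such that the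
subword between them is trivial; it exists by the van der Waerden action of `G ∗ F(X)` on reduced
words. All cost estimates are instances of the triangle inequality for `d` through a letter of
`X ⊔ X⁻¹`.
-/

lemma IsMetricD.nonneg {α : Type*} {d : α → α → ℝ} (hd : IsMetricD d) (a b : α) :
    0 ≤ d a b := by
  have := hd.2.2 a b a
  rw [(hd.1 a a).2 rfl, hd.2.1 b a] at this
  linarith

lemma IsBiInvariant.inv_inv {G : Type*} [Group G] {d : G → G → ℝ} (hd : IsBiInvariant d)
    (g h : G) : d g⁻¹ h⁻¹ = d h g := by
  simpa using hd h⁻¹ g⁻¹ h g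

section Letters

variable {G X : Type*} [Group G]

@[simp] lemma formalInv_inl (g : G) : formalInv (.inl g : Alphabet G X) = .inl g⁻¹ := rfl

@[simp] lemma formalInv_inr (z : X ⊕ X) : formalInv (.inr z : Alphabet G X) = .inr z.swap := by
  rcases z with x | x <;> rfl

@[simp] lemma formalInv_formalInv (a : Alphabet G X) : formalInv (formalInv a) = a := by
  rcases a with g | x | x <;> simp

@[simp] lemma isRight_formalInv (a : Alphabet G X) : (formalInv a).isRight = a.isRight := by
  rcases a with g | x | x <;> rfl

@[simp] lemma toFP_inl (g : G) : toFP (.inl g : Alphabet G X) = Coprod.inl g := rfl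

@[simp] lemma toFP_formalInv (a : Alphabet G X) : toFP (formalInv a) = (toFP a)⁻¹ := by
  rcases a with g | x | x <;> simp [toFP, formalInv]

@[simp] lemma toFP_inr_swap (z : X ⊕ X) :
    toFP (.inr z.swap : Alphabet G X) = (toFP (.inr z))⁻¹ := by
  rw [← formalInv_inr, toFP_formalInv]

@[simp] lemma wordProd_nil : wordProd ([] : List (Alphabet G X)) = 1 := rfl

@[simp] lemma wordProd_cons (a : Alphabet G X) (w : List (Alphabet G X)) :
    wordProd (a :: w) = toFP a * wordProd w := by
  simp [wordProd]

@[simp] lemma wordProd_append (v w : List (Alphabet G X)) :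
    wordProd (v ++ w) = wordProd v * wordProd w := by
  simp [wordProd]

lemma isIrreducibleWord_iff (l : List (Alphabet G X)) :
    IsIrreducibleWord l ↔ l.IsChain okPair := Iff.rfl

lemma okPair_inl_iff (g : G) (a : Alphabet G X) : okPair (.inl g) a ↔ a.isRight := by
  rcases a with h | z
  · exact iff_of_false id (by simp)
  · exact iff_of_true trivial rfl

lemma okPair_inr_iff (z : X ⊕ X) (a : Alphabet G X) :
    okPair (.inr z) a ↔ a ≠ formalInv (.inr z) := by
  rcases a with g | w
  · exact iff_of_true trivial (by simp)
  · exact Iff.rfl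

lemma not_okPair_iff {a b : Alphabet G X} :
    ¬ okPair a b ↔ (∃ g h : G, a = .inl g ∧ b = .inl h) ∨ ∃ z, a = .inr z ∧ b = formalInv a := by
  rcases a with g | z <;> rcases b with h | w <;> simp [okPair]

end Letters

section Rho

variable {α : Type*} (d : α → α → ℝ)

@[simp] lemma rho_nil_left (w : List α) : rho d [] w = 0 := rfl

@[simp] lemma rho_cons_cons (a b : α) (v w : List α) :
    rho d (a :: v) (b :: w) = d a b + rho d v w := by
  simp [rho]

lemma rho_append {v₁ w₁ : List α} (v₂ w₂ : List α) (h : v₁.length = w₁.length) :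
    rho d (v₁ ++ v₂) (w₁ ++ w₂) = rho d v₁ w₁ + rho d v₂ w₂ := by
  rw [rho, List.zipWith_append h, List.sum_append, rho, rho]

lemma rho_append_cons {W₁ U₁ : List α} (h : W₁.length = U₁.length) (a b : α) (W₂ U₂ : List α) :
    rho d (W₁ ++ a :: W₂) (U₁ ++ b :: U₂) = d a b + rho d (W₁ ++ W₂) (U₁ ++ U₂) := by
  rw [rho_append d _ _ h, rho_append d _ _ h, rho_cons_cons]
  ring

lemma rho_append_cons_le {r s : α} {K : ℝ} (hK : 0 ≤ K) (h : ∀ c, d c s ≤ d c r + K)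
    (P₁ P₂ W : List α) : rho d W (P₁ ++ s :: P₂) ≤ rho d W (P₁ ++ r :: P₂) + K := by
  induction P₁ generalizing W with
  | nil =>
    cases W with
    | nil => simpa using hK
    | cons c W => simp only [List.nil_append, rho_cons_cons]; linarith [h c]
  | cons a P₁ ih =>
    cases W with
    | nil => simpa using hK
    | cons c W => simpa [add_assoc] using ih W

end Rho

section Replaces

variable {α : Type*}

def Replaces (r s : α) (L L' : List α) : Prop :=
  ∃ P₁ P₂, L = P₁ ++ r :: P₂ ∧ L' = P₁ ++ s :: P₂

variable {r s : α} {L L' : List α}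

lemma Replaces.length_eq (h : Replaces r s L L') : L'.length = L.length := by
  obtain ⟨P₁, P₂, rfl, rfl⟩ := h
  simp

lemma Replaces.countP_add (h : Replaces r s L L') (f : α → Bool) :
    L'.countP f + (if f r then 1 else 0) = L.countP f + (if f s then 1 else 0) := by
  obtain ⟨P₁, P₂, rfl, rfl⟩ := h
  simp only [List.countP_append, List.countP_cons]
  omega

lemma Replaces.rho_le (h : Replaces r s L L') (d : α → α → ℝ) {K : ℝ} (hK : 0 ≤ K)
    (hd : ∀ c, d c s ≤ d c r + K) (W : List α) : rho d W L' ≤ rho d W L + K := by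
  obtain ⟨P₁, P₂, rfl, rfl⟩ := h
  exact rho_append_cons_le d hK hd P₁ P₂ W

end Replaces

lemma exists_append_cons_cons_of_length_eq {α β : Type*} {W₁ W₂ : List α} {a b : α}
    {u : List β} (h : (W₁ ++ a :: b :: W₂).length = u.length) :
    ∃ U₁ p q U₂, u = U₁ ++ p :: q :: U₂ ∧ W₁.length = U₁.length ∧ W₂.length = U₂.length := by
  induction W₁ generalizing u with
  | nil =>
    rcases u with _ | ⟨p, _ | ⟨q, U₂⟩⟩
    · simp at h
    · simp at h
    · exact ⟨[], p, q, U₂, rfl, rfl, by simpa using h⟩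
  | cons c W₁ ih =>
    rcases u with _ | ⟨p₀, u⟩
    · simp at h
    · obtain ⟨U₁, p, q, U₂, rfl, h₁, h₂⟩ := ih (by simpa using h)
      exact ⟨p₀ :: U₁, p, q, U₂, rfl, by simp [h₁], h₂⟩

section Extension

variable {G X : Type*} [Group G] {d' : G ⊕ X → G ⊕ X → ℝ}

lemma le_extD_pos_neg {A : ℝ} (x y : X)
    (h : ∀ c : G, A ≤ d' (.inr x) (.inl c) + d' (.inl c⁻¹) (.inr y)) :
    A ≤ extD d' (.inr (.inl x)) (.inr (.inr y)) :=
  le_csInf ⟨_, 1, rfl⟩ (by rintro r ⟨c, rfl⟩; exact h c)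

variable (hd : IsMetricD d')
include hd

lemma extD_pos_neg_le (x y : X) (c : G) :
    extD d' (.inr (.inl x)) (.inr (.inr y)) ≤ d' (.inr x) (.inl c) + d' (.inl c⁻¹) (.inr y) :=
  csInf_le ⟨0, by rintro r ⟨c, rfl⟩; exact add_nonneg (hd.nonneg _ _) (hd.nonneg _ _)⟩ ⟨c, rfl⟩

lemma extD_nonneg (a b : Alphabet G X) : 0 ≤ extD d' a b := by
  have := hd.nonneg
  rcases a with g | x | x <;> rcases b with h | y | y <;> simp only [extD] <;>
    first
    | exact this _ _
    | exact Real.sInf_nonneg (by rintro r ⟨c, rfl⟩; exact add_nonneg (this _ _) (this _ _))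

lemma extD_self (a : Alphabet G X) : extD d' a a = 0 := by
  rcases a with g | x | x <;> exact (hd.1 _ _).2 rfl

lemma extD_comm (a b : Alphabet G X) : extD d' a b = extD d' b a := by
  rcases a with g | x | x <;> rcases b with h | y | y <;> simp only [extD] <;>
    first | rfl | exact hd.2.1 _ _

variable (hinv : IsBiInvariant fun g h : G => d' (.inl g) (.inl h))
include hinv

lemma extD_formalInv (a b : Alphabet G X) : extD d' (formalInv a) (formalInv b) = extD d' a b := by
  rcases a with g | x | x <;> rcases b with h | y | y <;>
    simp only [formalInv, extD, inv_inv] <;>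
    first
    | rfl
    | exact (hinv.inv_inv _ _).trans (hd.2.1 _ _)
    | (congr 1; ext r; constructor <;>
        · rintro ⟨c, rfl⟩
          exact ⟨c⁻¹, by rw [inv_inv, add_comm, hd.2.1 (.inr _), hd.2.1 (.inl c⁻¹)]⟩)

lemma extD_triangle_pos (a c : Alphabet G X) (y : X) :
    extD d' a c ≤ extD d' a (.inr (.inl y)) + extD d' (.inr (.inl y)) c := by
  have T := hd.2.2
  have S := hd.2.1
  have I : ∀ g h : G, d' (.inl g⁻¹) (.inl h⁻¹) = d' (.inl h) (.inl g) := hinv.inv_inv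
  -- Where an infimum over `c ∈ G` occurs, the inequality is checked for each `c` separately.
  rcases a with g | x | x <;> rcases c with h | z | z <;> simp only [extD]
  · exact T _ _ _
  · exact T _ _ _
  · suffices d' (.inl g⁻¹) (.inr z) - d' (.inl g) (.inr y) ≤ extD d' (.inr (.inl y)) (.inr (.inr z))
      by simp only [extD] at this; linarith
    refine le_extD_pos_neg y z fun c => ?_
    linarith [T (.inl g⁻¹) (.inl c⁻¹) (.inr z), I g c, T (.inl c) (.inr y) (.inl g),
      S (.inl c) (.inr y), S (.inl g) (.inr y)]
  · exact T _ _ _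
  · exact T _ _ _
  · suffices extD d' (.inr (.inl x)) (.inr (.inr z)) - d' (.inr x) (.inr y) ≤
        extD d' (.inr (.inl y)) (.inr (.inr z)) by simp only [extD] at this; linarith
    refine le_extD_pos_neg y z fun c => ?_
    linarith [extD_pos_neg_le hd x z c, T (.inr x) (.inr y) (.inl c)]
  · suffices d' (.inr x) (.inl h⁻¹) - d' (.inr y) (.inl h) ≤
        extD d' (.inr (.inl y)) (.inr (.inr x)) by simp only [extD] at this; linarith
    refine le_extD_pos_neg y x fun c => ?_
    linarith [T (.inr x) (.inl c⁻¹) (.inl h⁻¹), I c h, T (.inl h) (.inr y) (.inl c),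
      S (.inr x) (.inl c⁻¹), S (.inl h) (.inr y)]
  · suffices extD d' (.inr (.inl z)) (.inr (.inr x)) - d' (.inr y) (.inr z) ≤
        extD d' (.inr (.inl y)) (.inr (.inr x)) by simp only [extD] at this; linarith
    refine le_extD_pos_neg y x fun c => ?_
    linarith [extD_pos_neg_le hd z x c, T (.inr z) (.inr y) (.inl c), S (.inr z) (.inr y)]
  · suffices d' (.inr x) (.inr z) - extD d' (.inr (.inl y)) (.inr (.inr z)) ≤
        extD d' (.inr (.inl y)) (.inr (.inr x)) by simp only [extD] at this; linarith
    refine le_extD_pos_neg y x fun c => ?_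
    suffices d' (.inr x) (.inr z) - d' (.inr y) (.inl c) - d' (.inl c⁻¹) (.inr x) ≤
        extD d' (.inr (.inl y)) (.inr (.inr z)) by linarith
    refine le_extD_pos_neg y z fun e => ?_
    linarith [T (.inr x) (.inl c⁻¹) (.inr z), T (.inl c⁻¹) (.inl e⁻¹) (.inr z), I c e,
      T (.inl e) (.inr y) (.inl c), S (.inr x) (.inl c⁻¹), S (.inl e) (.inr y)]

lemma extD_triangle (a c : Alphabet G X) {b : Alphabet G X} (hb : b.isRight) :
    extD d' a c ≤ extD d' a b + extD d' b c := by
  rcases b with _ | y | y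
  · simp at hb
  · exact extD_triangle_pos hd hinv a c y
  · rw [← extD_formalInv hd hinv a c, ← extD_formalInv hd hinv a,
      ← extD_formalInv hd hinv _ c]
    exact extD_triangle_pos hd hinv _ _ y

lemma extD_le_add_of_isRight (c s : Alphabet G X) {q : Alphabet G X} (hq : q.isRight) :
    extD d' c (formalInv s) ≤ extD d' c (formalInv q) + extD d' s q := by
  rw [← extD_formalInv hd hinv s q, extD_comm hd (formalInv s)]
  exact extD_triangle hd hinv _ _ (by simpa using hq)

lemma extD_formalInv_le_add (p q : Alphabet G X) {z : Alphabet G X} (hz : z.isRight) :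
    extD d' (formalInv p) q ≤ extD d' z p + extD d' (formalInv z) q := by
  rw [extD_comm hd z, ← extD_formalInv hd hinv p z]
  exact extD_triangle hd hinv _ _ (by simpa using hz)

lemma extD_formalInv_comm (p q : Alphabet G X) :
    extD d' (formalInv q) p = extD d' (formalInv p) q := by
  rw [← extD_formalInv hd hinv, formalInv_formalInv, extD_comm hd]

lemma extD_inl_mul_le (g₁ g₂ h₁ h₂ : G) :
    extD d' (.inl (g₁ * g₂)) (.inl (h₁ * h₂) : Alphabet G X) ≤
      extD d' (.inl g₁) (.inl h₁) + extD d' (.inl g₂) (.inl h₂) := by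
  have e₁ := hinv 1 g₂ g₁ h₁
  have e₂ := hinv h₁ 1 g₂ h₂
  simp only [one_mul, mul_one] at e₁ e₂
  simp only [extD]
  linarith [hd.2.2 (.inl (g₁ * g₂)) (.inl (h₁ * g₂)) (.inl (h₁ * h₂))]

end Extension

namespace NormalForm

variable {G X : Type*} [Group G]

open scoped Classical

def IsReduced (l : List (Alphabet G X)) : Prop := IsIrreducibleWord l ∧ .inl 1 ∉ l

@[simp] lemma isReduced_nil : IsReduced ([] : List (Alphabet G X)) := by
  simp [IsReduced, isIrreducibleWord_iff]

lemma isReduced_cons {a : Alphabet G X} {l : List (Alphabet G X)} :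
    IsReduced (a :: l) ↔ (∀ b ∈ l.head?, okPair a b) ∧ a ≠ .inl 1 ∧ IsReduced l := by
  simp only [IsReduced, isIrreducibleWord_iff, List.isChain_cons, List.mem_cons, not_or]
  tauto

noncomputable def mulG (g : G) : List (Alphabet G X) → List (Alphabet G X)
  | .inl h :: t => if g * h = 1 then t else .inl (g * h) :: t
  | l => if g = 1 then l else .inl g :: l

@[simp] lemma mulG_nil (g : G) : mulG g ([] : List (Alphabet G X)) = if g = 1 then [] else [.inl g] :=
  rfl

@[simp] lemma mulG_inl (g h : G) (t : List (Alphabet G X)) :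
    mulG g (.inl h :: t) = if g * h = 1 then t else .inl (g * h) :: t := rfl

@[simp] lemma mulG_inr (g : G) (z : X ⊕ X) (t : List (Alphabet G X)) :
    mulG g (.inr z :: t) = if g = 1 then .inr z :: t else .inl g :: .inr z :: t := rfl

noncomputable def mulX (z : X ⊕ X) : List (Alphabet G X) → List (Alphabet G X)
  | a :: t => if a = formalInv (.inr z) then t else .inr z :: a :: t
  | [] => [.inr z]

@[simp] lemma mulX_nil (z : X ⊕ X) : mulX z ([] : List (Alphabet G X)) = [.inr z] := rfl

@[simp] lemma mulX_cons (z : X ⊕ X) (a : Alphabet G X) (t : List (Alphabet G X)) :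
    mulX z (a :: t) = if a = formalInv (.inr z) then t else .inr z :: a :: t := rfl

lemma isReduced_mulG (g : G) {l : List (Alphabet G X)} (hl : IsReduced l) :
    IsReduced (mulG g l) := by
  rcases l with _ | ⟨h | z, t⟩
  · rw [mulG_nil]
    split_ifs with hg <;> simp [isReduced_cons, hg]
  · rw [isReduced_cons] at hl
    rw [mulG_inl]
    split_ifs with hgh
    · exact hl.2.2
    · simp only [isReduced_cons, okPair_inl_iff] at hl ⊢
      exact ⟨hl.1, by simpa using hgh, hl.2.2⟩
  · rw [mulG_inr]
    split_ifs with hg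
    · exact hl
    · simpa [isReduced_cons (a := Sum.inl g), okPair_inl_iff, hg] using hl

lemma isReduced_mulX (z : X ⊕ X) {l : List (Alphabet G X)} (hl : IsReduced l) :
    IsReduced (mulX z l) := by
  rcases l with _ | ⟨a, t⟩
  · simp [isReduced_cons]
  · rw [mulX_cons]
    split_ifs with ha
    · exact (isReduced_cons.1 hl).2.2
    · exact isReduced_cons.2 ⟨by simpa [okPair_inr_iff] using ha, by simp, hl⟩

lemma mulG_of_forall_head?_isRight (g : G) {t : List (Alphabet G X)}
    (ht : ∀ b ∈ t.head?, b.isRight) : mulG g t = if g = 1 then t else .inl g :: t := by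
  rcases t with _ | ⟨_ | z, t⟩
  · rfl
  · simp at ht
  · rfl

lemma mulG_one {l : List (Alphabet G X)} (hl : IsReduced l) : mulG 1 l = l := by
  rcases l with _ | ⟨h | z, t⟩
  · simp
  · have : h ≠ 1 := fun h1 => (isReduced_cons.1 hl).2.1 (by rw [h1])
    simp [this]
  · simp

lemma mulG_mulG (g k : G) {l : List (Alphabet G X)} (hl : IsReduced l) :
    mulG g (mulG k l) = mulG (g * k) l := by
  rcases l with _ | ⟨m | z, t⟩
  · by_cases hk : k = 1 <;> simp [hk]
  · have ht : ∀ b ∈ t.head?, b.isRight := by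
      simpa only [okPair_inl_iff] using (isReduced_cons.1 hl).1
    by_cases hkm : k * m = 1
    · have : g * k * m = g := by rw [mul_assoc, hkm, mul_one]
      simp [hkm, this, mulG_of_forall_head?_isRight g ht]
    · simp [hkm, mul_assoc]
  · by_cases hk : k = 1 <;> simp [hk]

lemma mulX_mulX_swap (z : X ⊕ X) {l : List (Alphabet G X)} (hl : IsReduced l) :
    mulX z (mulX z.swap l) = l := by
  rcases l with _ | ⟨a, t⟩
  · simp
  · by_cases ha : a = .inr z
    · subst ha
      rcases t with _ | ⟨b, t⟩
      · simp
      · have hb := (isReduced_cons.1 hl).1 b rfl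
        rw [okPair_inr_iff, formalInv_inr] at hb
        simp [hb]
    · simp [ha]

variable (G X) in
def ReducedWord := {l : List (Alphabet G X) // IsReduced l}

noncomputable def permG : G →* Equiv.Perm (ReducedWord G X) where
  toFun g :=
    { toFun r := ⟨mulG g r.1, isReduced_mulG g r.2⟩
      invFun r := ⟨mulG g⁻¹ r.1, isReduced_mulG _ r.2⟩
      left_inv r := Subtype.ext <| by simp [mulG_mulG _ _ r.2, mulG_one r.2]
      right_inv r := Subtype.ext <| by simp [mulG_mulG _ _ r.2, mulG_one r.2] }
  map_one' := Equiv.ext fun r => Subtype.ext (mulG_one r.2)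
  map_mul' g k := Equiv.ext fun r => Subtype.ext (mulG_mulG g k r.2).symm

noncomputable def permX (z : X ⊕ X) : Equiv.Perm (ReducedWord G X) where
  toFun r := ⟨mulX z r.1, isReduced_mulX z r.2⟩
  invFun r := ⟨mulX z.swap r.1, isReduced_mulX _ r.2⟩
  left_inv r := Subtype.ext <| by simpa using mulX_mulX_swap z.swap r.2
  right_inv r := Subtype.ext <| mulX_mulX_swap z r.2

noncomputable def toPerm : FP G X →* Equiv.Perm (ReducedWord G X) :=
  Coprod.lift permG (FreeGroup.lift fun x => permX (.inl x))

noncomputable def mulLetter : Alphabet G X → List (Alphabet G X) → List (Alphabet G X)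
  | .inl g => mulG g
  | .inr z => mulX z

lemma toPerm_toFP_apply (a : Alphabet G X) (r : ReducedWord G X) :
    (toPerm (toFP a) r).1 = mulLetter a r.1 := by
  rcases a with g | x | x <;> simp [toPerm, toFP, permG, permX, mulLetter] <;> rfl

noncomputable def reduce (C : List (Alphabet G X)) : List (Alphabet G X) := C.foldr mulLetter []

lemma reduce_eq_toPerm (C : List (Alphabet G X)) :
    reduce C = (toPerm (wordProd C) ⟨[], isReduced_nil⟩).1 := by
  induction C with
  | nil => rfl
  | cons a C ih =>
    change mulLetter a (reduce C) = _
    rw [ih, ← toPerm_toFP_apply, wordProd_cons, map_mul]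
    rfl

lemma reduce_eq_nil {C : List (Alphabet G X)} (h : wordProd C = 1) : reduce C = [] := by
  rw [reduce_eq_toPerm, h, map_one]
  rfl

lemma wordProd_mulLetter (a : Alphabet G X) (l : List (Alphabet G X)) :
    wordProd (mulLetter a l) = toFP a * wordProd l := by
  rcases a with g | z
  · rcases l with _ | ⟨h | w, t⟩ <;> simp only [mulLetter, mulG_nil, mulG_inl, mulG_inr] <;>
      split_ifs with hg <;> simp [toFP, ← mul_assoc, ← map_mul, hg]
  · rcases l with _ | ⟨a, t⟩ <;> simp only [mulLetter, mulX_nil, mulX_cons]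
    · simp
    · split_ifs with ha
      · rw [ha, wordProd_cons, toFP_formalInv, mul_inv_cancel_left]
      · simp

lemma wordProd_reduce (C : List (Alphabet G X)) : wordProd (reduce C) = wordProd C := by
  induction C with
  | nil => rfl
  | cons a C ih => rw [wordProd_cons, ← ih]; exact wordProd_mulLetter a _

lemma exists_mulLetter_cons_eq_append (a b : Alphabet G X) (M : List (Alphabet G X)) :
    ∃ K, mulLetter a (b :: M) = K ++ M := by
  rcases a with g | z
  · rcases b with h | w <;> simp only [mulLetter, mulG_inl, mulG_inr] <;> split_ifs
    exacts [⟨[], rfl⟩, ⟨[_], rfl⟩, ⟨[_], rfl⟩, ⟨[_, _], rfl⟩]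
  · simp only [mulLetter, mulX_cons]
    split_ifs
    exacts [⟨[], rfl⟩, ⟨[_, _], rfl⟩]

lemma exists_mulLetter_singleton_eq_append {a q : Alphabet G X} (hq : q.isRight)
    (ha : a ≠ formalInv q) : ∃ K, mulLetter a [q] = K ++ [q] := by
  rcases q with _ | y
  · simp at hq
  rcases a with g | z
  · simp only [mulLetter, mulG_inr]
    split_ifs
    exacts [⟨[], rfl⟩, ⟨[_], rfl⟩]
  · have : Sum.inr y ≠ formalInv (Sum.inr z : Alphabet G X) := fun h => ha (by simp [h])
    simp only [mulLetter, mulX_cons, if_neg this]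
    exact ⟨[_], rfl⟩

end NormalForm

section Partner

variable {G X : Type*} [Group G]

open NormalForm in
lemma exists_partner_of_append_singleton {q : Alphabet G X} (hq : q.isRight)
    {C : List (Alphabet G X)} (h : wordProd (C ++ [q]) = 1) :
    ∃ V V', C = V ++ formalInv q :: V' ∧ wordProd V' = 1 := by
  -- Reading `C` from the right: until a partner of `q` shows up, the reduced form ends with `q`.
  have key : ∀ C : List (Alphabet G X), (∃ V V', C = V ++ formalInv q :: V' ∧ wordProd V' = 1) ∨
      ∃ K, reduce (C ++ [q]) = K ++ [q] := by
    intro C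
    induction C with
    | nil =>
      rcases q with _ | z
      · simp at hq
      · exact Or.inr ⟨[], rfl⟩
    | cons c C ih =>
      rcases ih with ⟨V, V', rfl, hV'⟩ | ⟨K, hK⟩
      · exact Or.inl ⟨c :: V, V', rfl, hV'⟩
      change (∃ V V', _) ∨ ∃ K, mulLetter c (reduce (C ++ [q])) = K ++ [q]
      rw [hK]
      rcases K with _ | ⟨b, K⟩
      · have hC : wordProd C = 1 := by
          simpa using (wordProd_reduce (C ++ [q])).symm.trans (congrArg wordProd hK)
        by_cases hc : c = formalInv q
        · exact Or.inl ⟨[], C, by rw [hc]; rfl, hC⟩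
        · exact Or.inr (exists_mulLetter_singleton_eq_append hq hc)
      · obtain ⟨K', hK'⟩ := exists_mulLetter_cons_eq_append c b (K ++ [q])
        exact Or.inr ⟨K' ++ K, by simpa using hK'⟩
  rcases key C with hC | ⟨K, hK⟩
  · exact hC
  · simp [reduce_eq_nil h] at hK

lemma exists_partner {q : Alphabet G X} (hq : q.isRight) {U₁ U₂ : List (Alphabet G X)}
    (h : wordProd (U₁ ++ q :: U₂) = 1) :
    (∃ V V', U₂ = V ++ formalInv q :: V' ∧ wordProd V = 1) ∨
      (∃ V V', U₁ = V ++ formalInv q :: V' ∧ wordProd V' = 1) := by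
  have hrot : wordProd ((U₂ ++ U₁) ++ [q]) = 1 := by
    simp only [wordProd_append, wordProd_cons, wordProd_nil, mul_one] at h ⊢
    have hU₂ : wordProd U₂ = (wordProd U₁ * toFP q)⁻¹ :=
      eq_inv_of_mul_eq_one_right (by rw [mul_assoc]; exact h)
    rw [mul_assoc, hU₂, inv_mul_cancel]
  obtain ⟨V, V', hV, hV'⟩ := exists_partner_of_append_singleton hq hrot
  rcases List.append_eq_append_iff.1 hV with ⟨P, -, hU₁⟩ | ⟨_ | ⟨e, P⟩, hU₂, hrest⟩
  · exact Or.inr ⟨P, V', hU₁, hV'⟩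
  · exact Or.inr ⟨[], V', hrest.symm, hV'⟩
  · rw [List.cons_append] at hrest
    obtain ⟨rfl, rfl⟩ := List.cons.inj hrest
    refine Or.inl ⟨V, P, hU₂, ?_⟩
    simp only [hU₂, wordProd_append, wordProd_cons, toFP_formalInv] at h hV'
    -- `P` is the inverse of `U₁`, so `h` says that `V` is conjugate to `1`
    rw [eq_inv_of_mul_eq_one_left hV'] at h
    have : wordProd V = (wordProd U₁ * toFP q)⁻¹ *
        (wordProd U₁ * (toFP q * (wordProd V * ((toFP q)⁻¹ * (wordProd U₁)⁻¹)))) *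
          (wordProd U₁ * toFP q) := by group
    rw [this, h]
    group

end Partner


section Relabel

variable {G X : Type*} [Group G]

lemma exists_relabel {q : Alphabet G X} (hq : q.isRight) {U₁ U₂ : List (Alphabet G X)}
    (h : wordProd (U₁ ++ q :: U₂) = 1) (s : Alphabet G X) :
    ∃ U₁' U₂', U₁'.length = U₁.length ∧
      Replaces (formalInv q) (formalInv s) (U₁ ++ U₂) (U₁' ++ U₂') ∧
      wordProd (U₁' ++ s :: U₂') = 1 := by
  rcases exists_partner hq h with ⟨V, V', rfl, hV⟩ | ⟨V, V', rfl, hV'⟩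
  · refine ⟨U₁, V ++ formalInv s :: V', rfl, ⟨U₁ ++ V, V', by simp, by simp⟩, ?_⟩
    simpa [hV] using h
  · refine ⟨V ++ formalInv s :: V', U₂, by simp, ⟨V, V' ++ U₂, by simp, by simp⟩, ?_⟩
    simpa [hV'] using h

lemma exists_cancel {p q : Alphabet G X} (hq : q.isRight) {U₁ U₂ : List (Alphabet G X)}
    (h : wordProd (U₁ ++ p :: q :: U₂) = 1) :
    ∃ u₀, (u₀ = U₁ ++ U₂ ∨ Replaces (formalInv q) p (U₁ ++ U₂) u₀) ∧ wordProd u₀ = 1 := by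
  rw [show U₁ ++ p :: q :: U₂ = (U₁ ++ [p]) ++ q :: U₂ by simp] at h
  rcases exists_partner hq h with ⟨V, V', rfl, hV⟩ | ⟨V, V', hU₁, hV'⟩
  · exact ⟨U₁ ++ V ++ p :: V', Or.inr ⟨U₁ ++ V, V', by simp, rfl⟩, by simpa [hV] using h⟩
  rcases V'.eq_nil_or_concat with rfl | ⟨V'', b, rfl⟩
  · obtain ⟨rfl, hp⟩ := List.append_inj' hU₁ rfl
    obtain rfl : p = formalInv q := by simpa using hp
    exact ⟨U₁ ++ U₂, Or.inl rfl, by simpa using h⟩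
  · rw [List.concat_eq_append, ← List.cons_append, ← List.append_assoc] at hU₁
    obtain ⟨rfl, hb⟩ := List.append_inj' hU₁ rfl
    obtain rfl : p = b := by simpa using hb
    refine ⟨V ++ p :: V'' ++ U₂, Or.inr ⟨V, V'' ++ U₂, by simp, by simp⟩, ?_⟩
    simp only [List.concat_eq_append, wordProd_append, wordProd_cons, wordProd_nil,
      mul_one] at hV'
    simpa [eq_inv_of_mul_eq_one_left hV'] using h

end Relabel

section Reduction

variable {G X : Type*} [Group G]

def weight (w u : List (Alphabet G X)) : ℕ :=
  w.length + u.length + w.countP Sum.isRight + u.countP Sum.isRight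

structure Improves (d : Alphabet G X → Alphabet G X → ℝ) (w u w' u' : List (Alphabet G X)) :
    Prop where
  length_eq : w'.length = u'.length
  wordProd_eq : wordProd w' = wordProd w
  wordProd_eq_one : wordProd u' = 1
  rho_le : rho d w' u' ≤ rho d w u
  weight_lt : weight w' u' < weight w u

variable {d' : G ⊕ X → G ⊕ X → ℝ} (hd : IsMetricD d')
  (hinv : IsBiInvariant fun g h : G => d' (.inl g) (.inl h))
  {W₁ W₂ U₁ U₂ : List (Alphabet G X)} (h₁ : W₁.length = U₁.length)
  (h₂ : W₂.length = U₂.length)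
include hd hinv h₁ h₂

lemma improves_merge (g₁ g₂ α β : G) (hu : wordProd (U₁ ++ .inl α :: .inl β :: U₂) = 1) :
    Improves (extD d') (W₁ ++ .inl g₁ :: .inl g₂ :: W₂) (U₁ ++ .inl α :: .inl β :: U₂)
      (W₁ ++ .inl (g₁ * g₂) :: W₂) (U₁ ++ .inl (α * β) :: U₂) where
  length_eq := by simp [h₁, h₂]
  wordProd_eq := by simp [mul_assoc]
  wordProd_eq_one := by simpa [mul_assoc] using hu
  rho_le := by
    simp only [rho_append_cons _ h₁]
    linarith [extD_inl_mul_le hd hinv g₁ g₂ α β]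
  weight_lt := by simp [weight]; omega

lemma exists_improves_relabel (g : G) (y : X ⊕ X) (hu : wordProd (U₁ ++ .inr y :: U₂) = 1) :
    ∃ u', Improves (extD d') (W₁ ++ .inl g :: W₂) (U₁ ++ .inr y :: U₂) (W₁ ++ .inl g :: W₂) u' := by
  obtain ⟨U₁', U₂', hU₁', hrep, hu'⟩ := exists_relabel rfl hu (.inl g)
  have hcost := hrep.rho_le (extD d') (extD_nonneg hd _ _)
    (fun c => extD_le_add_of_isRight hd hinv c _ rfl) (W₁ ++ W₂)
  have hcount := hrep.countP_add Sum.isRight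
  have hlen := hrep.length_eq
  simp only [List.length_append] at hlen
  refine ⟨U₁' ++ .inl g :: U₂', by simp; omega, rfl, hu', ?_, ?_⟩
  · rw [rho_append_cons _ (h₁.trans hU₁'.symm), rho_append_cons _ h₁, extD_self hd]
    linarith
  · simp only [weight, List.countP_append, List.countP_cons, List.length_append,
      List.length_cons, isRight_formalInv, Sum.isRight_inl, Sum.isRight_inr,
      Bool.false_eq_true, ↓reduceIte] at hcount ⊢
    omega

lemma improves_swap {p q : Alphabet G X} (z : X ⊕ X) (α : G)
    (hα : .inl α = p ∨ .inl α = formalInv q) (hu : wordProd (U₁ ++ p :: q :: U₂) = 1) :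
    Improves (extD d') (W₁ ++ .inr z :: formalInv (.inr z) :: W₂) (U₁ ++ p :: q :: U₂)
      (W₁ ++ .inl α :: .inl α⁻¹ :: W₂) (U₁ ++ p :: q :: U₂) where
  length_eq := by simp [h₁, h₂]
  wordProd_eq := by simp
  wordProd_eq_one := hu
  rho_le := by
    simp only [rho_append_cons _ h₁]
    have key := extD_formalInv_le_add hd hinv p q (z := .inr z) rfl
    rcases hα with rfl | hα
    · rw [formalInv_inl] at key
      linarith [extD_self hd (.inl α : Alphabet G X)]
    · rw [← formalInv_inl, hα, formalInv_formalInv, extD_self hd,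
        extD_formalInv_comm hd hinv]
      linarith
  weight_lt := by
    simp only [weight, List.countP_append, List.countP_cons, List.length_append,
      List.length_cons, Sum.isRight_inl, Sum.isRight_inr, isRight_formalInv,
      Bool.false_eq_true, ↓reduceIte]
    omega

lemma exists_improves_cancel {p q : Alphabet G X} (z : X ⊕ X) (hp : p.isRight) (hq : q.isRight)
    (hu : wordProd (U₁ ++ p :: q :: U₂) = 1) :
    ∃ u₀, Improves (extD d') (W₁ ++ .inr z :: formalInv (.inr z) :: W₂) (U₁ ++ p :: q :: U₂)
      (W₁ ++ W₂) u₀ := by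
  obtain ⟨u₀, hu₀, hu₀'⟩ := exists_cancel hq hu
  have hcost : rho (extD d') (W₁ ++ W₂) u₀ ≤
      rho (extD d') (W₁ ++ W₂) (U₁ ++ U₂) + extD d' (formalInv p) q := by
    rcases hu₀ with rfl | hrep
    · linarith [extD_nonneg hd (formalInv p) q]
    · refine hrep.rho_le _ (extD_nonneg hd _ _) (fun c => ?_) _
      simpa using extD_le_add_of_isRight hd hinv c (formalInv p) hq
  have hcount : u₀.length = U₁.length + U₂.length ∧
      u₀.countP Sum.isRight ≤ U₁.countP Sum.isRight + U₂.countP Sum.isRight + 1 := by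
    rcases hu₀ with rfl | hrep
    · simp
    · have := hrep.countP_add Sum.isRight
      simp only [List.countP_append] at this ⊢
      exact ⟨hrep.length_eq.trans (List.length_append ..), by split_ifs at this <;> omega⟩
  refine ⟨u₀, by simp [h₁, h₂, hcount.1], by simp, hu₀', ?_, ?_⟩
  · simp only [rho_append_cons _ h₁]
    linarith [extD_formalInv_le_add hd hinv p q (z := .inr z) rfl]
  · simp only [weight, List.countP_append, List.countP_cons, List.length_append,
      List.length_cons, Sum.isRight_inr, isRight_formalInv, hp, hq, ↓reduceIte]
    omega

lemma exists_improves {a b p q : Alphabet G X} (hab : ¬ okPair a b)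
    (hu : wordProd (U₁ ++ p :: q :: U₂) = 1) :
    ∃ w' u', Improves (extD d') (W₁ ++ a :: b :: W₂) (U₁ ++ p :: q :: U₂) w' u' := by
  rcases not_okPair_iff.1 hab with ⟨g₁, g₂, rfl, rfl⟩ | ⟨z, rfl, rfl⟩
  · rcases p with α | y
    · rcases q with β | y
      · exact ⟨_, _, improves_merge hd hinv h₁ h₂ g₁ g₂ α β hu⟩
      · obtain ⟨u', hu'⟩ := exists_improves_relabel hd hinv (W₁ := W₁ ++ [.inl g₁])
          (U₁ := U₁ ++ [.inl α]) (by simp [h₁]) h₂ g₂ y (by simpa using hu)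
        exact ⟨_, u', by simpa using hu'⟩
    · obtain ⟨u', hu'⟩ := exists_improves_relabel hd hinv (W₂ := .inl g₂ :: W₂) h₁
        (by simp [h₂]) g₁ y hu
      exact ⟨_, u', hu'⟩
  · rcases p with α | y
    · exact ⟨_, _, improves_swap hd hinv h₁ h₂ z α (.inl rfl) hu⟩
    rcases q with β | y'
    · exact ⟨_, _, improves_swap hd hinv h₁ h₂ z β⁻¹ (.inr rfl) hu⟩
    · exact ⟨_, exists_improves_cancel hd hinv h₁ h₂ z rfl rfl hu⟩

end Reduction

section Main

variable {G X : Type*} [Group G] {d' : G ⊕ X → G ⊕ X → ℝ}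

lemma exists_irreducible_le (hd : IsMetricD d')
    (hinv : IsBiInvariant fun g h : G => d' (.inl g) (.inl h)) {w u : List (Alphabet G X)}
    (hlen : w.length = u.length) (hu : wordProd u = 1) :
    ∃ w' u', w'.length = u'.length ∧ wordProd w' = wordProd w ∧ wordProd u' = 1 ∧
      IsIrreducibleWord w' ∧ rho (extD d') w' u' ≤ rho (extD d') w u := by
  induction hn : weight w u using Nat.strong_induction_on generalizing w u with
  | _ n ih =>
    by_cases hw : IsIrreducibleWord w
    · exact ⟨w, u, hlen, rfl, hu, hw, le_rfl⟩
    rw [isIrreducibleWord_iff, List.isChain_iff_forall_rel_of_append_cons_cons] at hw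
    push Not at hw
    obtain ⟨a, b, W₁, W₂, rfl, hab⟩ := hw
    obtain ⟨U₁, p, q, U₂, rfl, h₁, h₂⟩ := exists_append_cons_cons_of_length_eq hlen
    obtain ⟨w', u', hi⟩ := exists_improves hd hinv h₁ h₂ hab hu
    obtain ⟨w'', u'', hlen'', hw'', hu'', hirr, hcost⟩ :=
      ih _ (hn ▸ hi.weight_lt) hi.length_eq hi.wordProd_eq_one rfl
    exact ⟨w'', u'', hlen'', hw''.trans hi.wordProd_eq, hu'', hirr, hcost.trans hi.rho_le⟩

end Main

theorem graevDelta_irreducible_words_general {G X : Type*} [Group G]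
    (dG : G → G → ℝ) (d' : (G ⊕ X) → (G ⊕ X) → ℝ)
    (hGinv : IsBiInvariant dG)
    (h' : IsMetricD d')
    (hextG : ∀ g h : G, d' (Sum.inl g) (Sum.inl h) = dG g h)
    (g : FP G X) :
    graevDelta (extD d') g 1 =
      sInf { r | ∃ w u : List (Alphabet G X), w.length = u.length ∧
        wordProd w = g ∧ wordProd u = 1 ∧ IsIrreducibleWord w ∧
        r = rho (extD d') w u } := by
  have hinv : IsBiInvariant fun a b : G => d' (.inl a) (.inl b) := by
    simpa only [hextG] using hGinv
  refine csInf_eq_csInf_of_forall_exists_le ?_ ?_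
  · rintro _ ⟨w, u, hlen, rfl, hu, rfl⟩
    obtain ⟨w', u', hlen', hw', hu', hirr, hcost⟩ := exists_irreducible_le h' hinv hlen hu
    exact ⟨_, ⟨w', u', hlen', hw', hu', hirr, rfl⟩, hcost⟩
  · rintro _ ⟨w, u, hlen, hw, hu, -, rfl⟩
    exact ⟨_, ⟨w, u, hlen, hw, hu, rfl⟩, le_rfl⟩

/-- Lemma 2. In computing `δ(g, 1)` one may restrict the word
representing `g` to be irreducible: `δ(g,1)` equals the infimum of `ρ(w,u)` over pairs of
equal-length words with `w' = g`, `u' = 1` and `w` irreducible. -/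
theorem graevDelta_irreducible_words {G X : Type*} [Group G]
    (dG : G → G → ℝ) (dX : X → X → ℝ) (d' : (G ⊕ X) → (G ⊕ X) → ℝ)
    (hG : IsMetricD dG) (hGinv : IsBiInvariant dG) (hX : IsMetricD dX)
    (h' : IsMetricD d')
    (hextG : ∀ g h : G, d' (Sum.inl g) (Sum.inl h) = dG g h)
    (hextX : ∀ x y : X, d' (Sum.inr x) (Sum.inr y) = dX x y)
    (hpos : ∀ x : X, ∃ ε > (0 : ℝ), ∀ g : G, ε ≤ d' (Sum.inl g) (Sum.inr x))
    (g : FP G X) :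
    graevDelta (extD d') g 1 =
      sInf { r | ∃ w u : List (Alphabet G X), w.length = u.length ∧
        wordProd w = g ∧ wordProd u = 1 ∧ IsIrreducibleWord w ∧
        r = rho (extD d') w u } :=
  graevDelta_irreducible_words_general dG d' hGinv h' hextG g
end

section
/- Let G be a group with a finitely generated metric d_G with generating set A_G, and let F = F(A_G \ {1}) be the free group on A_G \ {1} equipped with the Graev metric δ constructed over the pointed metric space (A_G \ {1}) ⊔ {1} with the metric inherited from d_G (i.e., the case G = {1} of the Graev construction, with unit 1 ∈ A_G as base point). Then the canonical surjective homomorphism π : F → G sending each generator a ∈ A_G \ {1} to a ∈ G is 1-Lipschitz, and for all g,h ∈ G one has d_G(g,h) = inf{ δ(u,v) : u,v ∈ F, π(u) = g, π(v) = h }; i.e., d_G is the factor metric of the Graev metric. -/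
open Monoid

/-- Canonical image of a letter of `{1} ⊔ Y ⊔ Y⁻¹` in the free group `F(Y)`. -/
def toFree {Y : Type*} : (Unit ⊕ (Y ⊕ Y)) → FreeGroup Y
  | Sum.inl _ => 1
  | Sum.inr (Sum.inl y) => FreeGroup.of y
  | Sum.inr (Sum.inr y) => (FreeGroup.of y)⁻¹

/-- The Graev metric on the free group `F(Y)` over a pointed space `Y ⊔ {1}`,
computed from the distance function `d` on the alphabet `{1} ⊔ Y ⊔ Y⁻¹`. -/
noncomputable def graevDeltaFree {Y : Type*}
    (d : (Unit ⊕ (Y ⊕ Y)) → (Unit ⊕ (Y ⊕ Y)) → ℝ) (u v : FreeGroup Y) : ℝ :=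
  sInf { r | ∃ w₁ w₂ : List (Unit ⊕ (Y ⊕ Y)), w₁.length = w₂.length ∧
    (w₁.map toFree).prod = u ∧ (w₂.map toFree).prod = v ∧ r = rho d w₁ w₂ }

/-- The non-unit generators `A \ {1}` of a group with a finitely generated metric. -/
abbrev GenType {G : Type*} [Group G] (A : Set G) := { a : G // a ∈ A ∧ a ≠ 1 }

/-- The distance function on the alphabet `{1} ⊔ (A \ {1}) ⊔ (A \ {1})⁻¹` inherited from
`d_G` on the pointed space `(A \ {1}) ⊔ {1}`, as in the Graev construction: inverse
letters are carried back by the formal-inverse isometry, and the distance from a positive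
letter to a negative letter passes through the base point `1`. -/
noncomputable def graevBaseD {G : Type*} [Group G] (dG : G → G → ℝ) (A : Set G) :
    (Unit ⊕ (GenType A ⊕ GenType A)) → (Unit ⊕ (GenType A ⊕ GenType A)) → ℝ
  | Sum.inl _, Sum.inl _ => dG 1 1
  | Sum.inl _, Sum.inr (Sum.inl y) => dG 1 (y : G)
  | Sum.inl _, Sum.inr (Sum.inr y) => dG 1 (y : G)
  | Sum.inr (Sum.inl y), Sum.inl _ => dG (y : G) 1
  | Sum.inr (Sum.inr y), Sum.inl _ => dG (y : G) 1
  | Sum.inr (Sum.inl y), Sum.inr (Sum.inl z) => dG (y : G) (z : G)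
  | Sum.inr (Sum.inr y), Sum.inr (Sum.inr z) => dG (y : G) (z : G)
  | Sum.inr (Sum.inl y), Sum.inr (Sum.inr z) => dG (y : G) 1 + dG 1 (z : G)
  | Sum.inr (Sum.inr y), Sum.inr (Sum.inl z) => dG (y : G) 1 + dG 1 (z : G)

/-!
Concatenating optimal presentations shows that a finitely generated metric satisfies
`d(ab, ce) ≤ d(a, c) + d(b, e)`, hence `d(x⁻¹, y⁻¹) ≤ d(x, y)`. So each letter distance of the
Graev alphabet dominates the `d_G`-distance of the images of the letters in `G`, and summing
over a pair of words (using minimality of `d_G` over presentations by letters of `A`) shows that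
`π` is `1`-Lipschitz. Conversely, an optimal presentation of `(g, h)` by letters of `A` is
itself a pair of words over the Graev alphabet of the same cost, so the infimum is attained.
-/

theorem IsMetricD.nonneg_s12 {α : Type*} {d : α → α → ℝ} (hm : IsMetricD d) (x y : α) :
    0 ≤ d x y := by
  have := hm.2.2 x y x
  rw [(hm.1 x x).2 rfl, hm.2.1 y x] at this
  linarith

theorem rho_le_rho {α : Type*} {d d' : α → α → ℝ} {v w : List α}
    (h : ∀ a ∈ v, ∀ b ∈ w, d a b ≤ d' a b) : rho d v w ≤ rho d' v w := by
  simp only [rho, ← List.map_uncurry_zip_eq_zipWith]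
  exact List.sum_le_sum fun p hp => h p.1 (List.of_mem_zip hp).1 p.2 (List.of_mem_zip hp).2

theorem rho_nonneg {α : Type*} {d : α → α → ℝ} (hd : ∀ a b, 0 ≤ d a b) (v w : List α) :
    0 ≤ rho d v w := by
  simp only [rho, ← List.map_uncurry_zip_eq_zipWith]
  exact List.sum_nonneg (List.forall_mem_map.2 fun p _ => hd p.1 p.2)

namespace IsFinGenMetric

variable {G : Type*} [Group G] {dG : G → G → ℝ} {A : Set G}

theorem dist_prod_le (hfg : IsFinGenMetric dG A) {l m : List G} (hlen : l.length = m.length)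
    (hlA : ∀ x ∈ l, x ∈ A) (hmA : ∀ y ∈ m, y ∈ A) : dG l.prod m.prod ≤ rho dG l m :=
  (hfg.2.2.2 l.prod m.prod).2 ⟨l, m, hlen, hlA, hmA, rfl, rfl, rfl⟩

theorem dist_mul_le_s12 (hfg : IsFinGenMetric dG A) (a b c e : G) :
    dG (a * b) (c * e) ≤ dG a c + dG b e := by
  obtain ⟨l₁, m₁, hlen₁, hl₁, hm₁, rfl, rfl, hs₁⟩ := (hfg.2.2.2 a c).1
  obtain ⟨l₂, m₂, hlen₂, hl₂, hm₂, rfl, rfl, hs₂⟩ := (hfg.2.2.2 b e).1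
  calc dG (l₁.prod * l₂.prod) (m₁.prod * m₂.prod) = dG (l₁ ++ l₂).prod (m₁ ++ m₂).prod := by
        simp only [List.prod_append]
    _ ≤ rho dG (l₁ ++ l₂) (m₁ ++ m₂) :=
        hfg.dist_prod_le (by simp [hlen₁, hlen₂]) (by simpa [or_imp, forall_and] using ⟨hl₁, hl₂⟩)
          (by simpa [or_imp, forall_and] using ⟨hm₁, hm₂⟩)
    _ = _ := by rw [rho, List.zipWith_append hlen₁, List.sum_append, hs₁, hs₂]

theorem dist_inv_le (hm : IsMetricD dG) (hfg : IsFinGenMetric dG A) (x y : G) :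
    dG x⁻¹ y⁻¹ ≤ dG x y := by
  have h₁ := hfg.dist_mul_le_s12 (y⁻¹ * y) x⁻¹ (y⁻¹ * x) x⁻¹
  have h₂ := hfg.dist_mul_le_s12 y⁻¹ y y⁻¹ x
  rw [inv_mul_cancel, one_mul, mul_inv_cancel_right, (hm.1 x⁻¹ x⁻¹).2 rfl] at h₁
  rw [(hm.1 y⁻¹ y⁻¹).2 rfl, hm.2.1 y, inv_mul_cancel] at h₂
  linarith

end IsFinGenMetric

section GraevDelta

variable {Y : Type*} {d : (Unit ⊕ (Y ⊕ Y)) → (Unit ⊕ (Y ⊕ Y)) → ℝ}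

theorem exists_map_toFree_prod_eq (u : FreeGroup Y) :
    ∃ w : List (Unit ⊕ (Y ⊕ Y)), (w.map toFree).prod = u := by
  induction u using FreeGroup.induction_on with
  | C1 => exact ⟨[], rfl⟩
  | of y => exact ⟨[Sum.inr (Sum.inl y)], by simp [toFree]⟩
  | inv_of y _ => exact ⟨[Sum.inr (Sum.inr y)], by simp [toFree]⟩
  | mul u v hu hv =>
    obtain ⟨w₁, rfl⟩ := hu
    obtain ⟨w₂, rfl⟩ := hv
    exact ⟨w₁ ++ w₂, by simp⟩

-- Words of different lengths are equalized by padding with the letter `1`.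
theorem exists_map_toFree_prod_eq_of_length_eq (u v : FreeGroup Y) :
    ∃ w₁ w₂ : List (Unit ⊕ (Y ⊕ Y)), w₁.length = w₂.length ∧
      (w₁.map toFree).prod = u ∧ (w₂.map toFree).prod = v := by
  obtain ⟨w₁, rfl⟩ := exists_map_toFree_prod_eq u
  obtain ⟨w₂, rfl⟩ := exists_map_toFree_prod_eq v
  refine ⟨w₁ ++ List.replicate (w₂.length - w₁.length) (Sum.inl ()),
    w₂ ++ List.replicate (w₁.length - w₂.length) (Sum.inl ()), ?_, ?_, ?_⟩
  · simp only [List.length_append, List.length_replicate]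
    omega
  all_goals simp [List.map_replicate, toFree]

theorem le_graevDeltaFree {u v : FreeGroup Y} {r : ℝ}
    (h : ∀ w₁ w₂ : List (Unit ⊕ (Y ⊕ Y)), w₁.length = w₂.length →
      (w₁.map toFree).prod = u → (w₂.map toFree).prod = v → r ≤ rho d w₁ w₂) :
    r ≤ graevDeltaFree d u v := by
  obtain ⟨w₁, w₂, hlen, hu, hv⟩ := exists_map_toFree_prod_eq_of_length_eq u v
  refine le_csInf ⟨_, w₁, w₂, hlen, hu, hv, rfl⟩ ?_
  rintro _ ⟨w₁, w₂, hlen, hu, hv, rfl⟩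
  exact h w₁ w₂ hlen hu hv

theorem graevDeltaFree_le_rho (hd : ∀ a b, 0 ≤ d a b) {w₁ w₂ : List (Unit ⊕ (Y ⊕ Y))}
    (hlen : w₁.length = w₂.length) :
    graevDeltaFree d (w₁.map toFree).prod (w₂.map toFree).prod ≤ rho d w₁ w₂ := by
  refine csInf_le ⟨0, ?_⟩ ⟨w₁, w₂, hlen, rfl, rfl, rfl⟩
  rintro _ ⟨w₁, w₂, -, -, -, rfl⟩
  exact rho_nonneg hd w₁ w₂

theorem graevDeltaFree_nonneg (hd : ∀ a b, 0 ≤ d a b) (u v : FreeGroup Y) :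
    0 ≤ graevDeltaFree d u v :=
  Real.sInf_nonneg fun _ ⟨w₁, w₂, _, _, _, hr⟩ => hr ▸ rho_nonneg hd w₁ w₂

end GraevDelta

section FactorMetric

variable {G : Type*} [Group G] {dG : G → G → ℝ} {A : Set G}

local notation "π" => FreeGroup.lift (fun y : GenType A => (y : G))

theorem lift_toFree_mem (hfg : IsFinGenMetric dG A) (s : Unit ⊕ (GenType A ⊕ GenType A)) :
    π (toFree s) ∈ A := by
  rcases s with _ | y | y
  · exact hfg.2.1
  · simpa [toFree] using y.2.1
  · simpa [toFree] using hfg.2.2.1 _ y.2.1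

theorem graevBaseD_nonneg (hm : IsMetricD dG) (s t : Unit ⊕ (GenType A ⊕ GenType A)) :
    0 ≤ graevBaseD dG A s t := by
  rcases s with _ | y | y <;> rcases t with _ | z | z <;> simp only [graevBaseD] <;>
    first
      | exact hm.nonneg_s12 _ _
      | exact add_nonneg (hm.nonneg_s12 _ _) (hm.nonneg_s12 _ _)

theorem dist_lift_toFree_le_graevBaseD (hm : IsMetricD dG) (hfg : IsFinGenMetric dG A)
    (s t : Unit ⊕ (GenType A ⊕ GenType A)) :
    dG (π (toFree s)) (π (toFree t)) ≤ graevBaseD dG A s t := by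
  have one_inv_le (z : G) : dG 1 z⁻¹ ≤ dG 1 z := by simpa using hfg.dist_inv_le hm 1 z
  have inv_one_le (z : G) : dG z⁻¹ 1 ≤ dG z 1 := by simpa using hfg.dist_inv_le hm z 1
  rcases s with _ | y | y <;> rcases t with _ | z | z <;>
    simp only [toFree, map_one, map_inv, FreeGroup.lift_apply_of, graevBaseD] <;>
    first
      | exact le_rfl
      | exact one_inv_le _
      | exact inv_one_le _
      | exact hfg.dist_inv_le hm _ _
      | exact (hm.2.2 _ 1 _).trans (add_le_add le_rfl (one_inv_le _))
      | exact (hm.2.2 _ 1 _).trans (add_le_add (inv_one_le _) le_rfl)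

theorem dist_lift_le_rho (hm : IsMetricD dG) (hfg : IsFinGenMetric dG A)
    {w₁ w₂ : List (Unit ⊕ (GenType A ⊕ GenType A))} (hlen : w₁.length = w₂.length) :
    dG (π (w₁.map toFree).prod) (π (w₂.map toFree).prod) ≤ rho (graevBaseD dG A) w₁ w₂ := by
  rw [map_list_prod, map_list_prod, List.map_map, List.map_map]
  calc _ ≤ rho dG (w₁.map (π ∘ toFree)) (w₂.map (π ∘ toFree)) :=
        hfg.dist_prod_le (by simp [hlen])
          (List.forall_mem_map.2 fun s _ => lift_toFree_mem hfg s)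
          (List.forall_mem_map.2 fun s _ => lift_toFree_mem hfg s)
    _ = rho (fun s t => dG (π (toFree s)) (π (toFree t))) w₁ w₂ := by
        rw [rho, List.zipWith_map]; rfl
    _ ≤ rho (graevBaseD dG A) w₁ w₂ :=
        rho_le_rho fun s _ t _ => dist_lift_toFree_le_graevBaseD hm hfg s t

theorem dist_lift_le_graevDeltaFree (hm : IsMetricD dG) (hfg : IsFinGenMetric dG A)
    (u v : FreeGroup (GenType A)) : dG (π u) (π v) ≤ graevDeltaFree (graevBaseD dG A) u v :=
  le_graevDeltaFree fun _ _ hlen hu hv => hu ▸ hv ▸ dist_lift_le_rho hm hfg hlen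

open Classical in
noncomputable def genLetter (A : Set G) (a : G) : Unit ⊕ (GenType A ⊕ GenType A) :=
  if h : a ∈ A ∧ a ≠ 1 then Sum.inr (Sum.inl ⟨a, h⟩) else Sum.inl ()

theorem lift_toFree_genLetter {a : G} (ha : a ∈ A) : π (toFree (genLetter A a)) = a := by
  by_cases h : a = 1
  · simp [genLetter, h, toFree]
  · simp [genLetter, ha, h, toFree]

theorem graevBaseD_genLetter {a b : G} (ha : a ∈ A) (hb : b ∈ A) :
    graevBaseD dG A (genLetter A a) (genLetter A b) = dG a b := by
  by_cases h₁ : a = 1 <;> by_cases h₂ : b = 1 <;> simp [genLetter, graevBaseD, ha, hb, h₁, h₂]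

theorem exists_lift_eq_graevDeltaFree_le (hm : IsMetricD dG) (hfg : IsFinGenMetric dG A)
    (g h : G) : ∃ u v : FreeGroup (GenType A), π u = g ∧ π v = h ∧
      graevDeltaFree (graevBaseD dG A) u v ≤ dG g h := by
  obtain ⟨l, m, hlen, hlA, hmA, rfl, rfl, hsum⟩ := (hfg.2.2.2 g h).1
  have lift_word {k : List G} (hk : ∀ x ∈ k, x ∈ A) :
      π ((k.map (genLetter A)).map toFree).prod = k.prod := by
    rw [map_list_prod, List.map_map, List.map_map]
    exact congrArg List.prod
      ((List.map_congr_left fun a ha => lift_toFree_genLetter (hk a ha)).trans k.map_id)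
  refine ⟨_, _, lift_word hlA, lift_word hmA, ?_⟩
  calc _ ≤ rho (graevBaseD dG A) (l.map (genLetter A)) (m.map (genLetter A)) :=
        graevDeltaFree_le_rho (graevBaseD_nonneg hm) (by simp [hlen])
    _ ≤ rho dG l m := by
        rw [rho, List.zipWith_map]
        exact rho_le_rho fun a ha b hb => (graevBaseD_genLetter (hlA a ha) (hmA b hb)).le
    _ = _ := hsum.symm

end FactorMetric

/-- If `d_G` is a finitely generated metric on `G` with generating set
`A`, then the canonical surjection `π : F(A \ {1}) → G` from the free group with the Graev
metric over `(A \ {1}) ⊔ {1}` is `1`-Lipschitz, and `d_G` is the factor metric of the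
Graev metric. -/
theorem finGenMetric_factor_of_graev {G : Type*} [Group G] (dG : G → G → ℝ) (A : Set G)
    (hm : IsMetricD dG) (hfg : IsFinGenMetric dG A) :
    Function.Surjective (FreeGroup.lift (fun y : GenType A => (y : G))) ∧
    (∀ u v : FreeGroup (GenType A),
      dG (FreeGroup.lift (fun y : GenType A => (y : G)) u)
         (FreeGroup.lift (fun y : GenType A => (y : G)) v) ≤
        graevDeltaFree (graevBaseD dG A) u v) ∧
    (∀ g h : G, dG g h =
      sInf { r | ∃ u v : FreeGroup (GenType A),
        FreeGroup.lift (fun y : GenType A => (y : G)) u = g ∧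
        FreeGroup.lift (fun y : GenType A => (y : G)) v = h ∧
        r = graevDeltaFree (graevBaseD dG A) u v }) := by
  refine ⟨fun g => ?_, dist_lift_le_graevDeltaFree hm hfg, fun g h => ?_⟩
  · obtain ⟨u, -, hu, -⟩ := exists_lift_eq_graevDeltaFree_le hm hfg g g
    exact ⟨u, hu⟩
  obtain ⟨u, v, hu, hv, huv⟩ := exists_lift_eq_graevDeltaFree_le hm hfg g h
  apply le_antisymm
  · refine le_csInf ⟨_, u, v, hu, hv, rfl⟩ ?_
    rintro _ ⟨u', v', rfl, rfl, rfl⟩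
    exact dist_lift_le_graevDeltaFree hm hfg u' v'
  · refine le_trans (csInf_le ⟨0, ?_⟩ ⟨u, v, hu, hv, rfl⟩) huv
    rintro _ ⟨u', v', -, -, rfl⟩
    exact graevDeltaFree_nonneg (graevBaseD_nonneg hm) u' v'
end
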